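/- Let Z be an n×n complex Hermitian matrix, ζ ∈ ℝ such that ζ I − Z is positive semidefinite, and q ∈ ℂⁿ. Let θ₀ ∈ ℂⁿ have |(θ₀)ᵢ| = 1 for all i, set u = (Z − ζ I) θ₀ − q, and suppose uᵢ ≠ 0 for every i. Define the MM iterate θ⁺ by θ⁺ᵢ = −uᵢ/|uᵢ|. Then θ⁺ has unit-modulus entries and g(θ⁺) ≤ g(θ₀), where g(θ) = Re(θᴴ Z θ) − 2 Re(θᴴ q). -/

import Mathlib

/-!
Write `M = ζI − Z ⪰ 0`. On the unit-modulus torus `θᴴθ = n`, so `g θ = ζn − Re θᴴMθ − 2 Re θᴴq`,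
and positive semidefiniteness majorizes the concave part at `θ₀` by its linearization:
`−Re θᴴMθ ≤ Re θ₀ᴴMθ₀ − 2 Re θᴴMθ₀`. Since `Mθ₀ = −(u + q)`, this surrogate is tight at `θ₀` and
depends on `θ` only through `2 Re θᴴu`, which `θ⁺` minimizes entrywise over the torus:
`Re (conj θᵢ uᵢ) ≥ −|uᵢ|`, with equality at `θᵢ = −uᵢ/|uᵢ|`.
-/

open Matrix ComplexOrder

section
variable {𝕜 : Type*} [RCLike 𝕜]

theorem norm_neg_div_norm {x : 𝕜} (hx : x ≠ 0) : ‖-x / (‖x‖ : 𝕜)‖ = 1 := by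
  rw [norm_div, norm_neg, RCLike.norm_ofReal, abs_norm, div_self (norm_ne_zero_iff.mpr hx)]

theorem star_neg_div_norm_mul (x : 𝕜) : star (-x / (‖x‖ : 𝕜)) * x = -(‖x‖ : 𝕜) := by
  rcases eq_or_ne x 0 with rfl | hx
  · simp
  have hx_norm : (‖x‖ : 𝕜) ≠ 0 := RCLike.ofReal_ne_zero.mpr (norm_ne_zero_iff.mpr hx)
  rw [star_div₀, star_neg, RCLike.star_def, RCLike.conj_ofReal, div_mul_eq_mul_div, neg_mul,
    RCLike.conj_mul]
  field_simp

theorem neg_norm_le_re_star_mul {θ : 𝕜} (hθ : ‖θ‖ = 1) (x : 𝕜) :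
    -‖x‖ ≤ RCLike.re (star θ * x) := by
  simpa [hθ] using neg_le_of_abs_le (RCLike.abs_re_le_norm (star θ * x))

variable {ι : Type*} [Fintype ι]

theorem star_dotProduct_self_of_norm_eq_one {θ : ι → 𝕜} (hθ : ∀ i, ‖θ i‖ = 1) :
    star θ ⬝ᵥ θ = Fintype.card ι := by
  simp [dotProduct, RCLike.conj_mul, hθ]

theorem re_star_dotProduct_le_of_norm_eq_one (u : ι → 𝕜) {θ : ι → 𝕜} (hθ : ∀ i, ‖θ i‖ = 1) :
    RCLike.re (star (fun i ↦ -u i / (‖u i‖ : 𝕜)) ⬝ᵥ u) ≤ RCLike.re (star θ ⬝ᵥ u) := by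
  simp only [dotProduct, Pi.star_apply, star_neg_div_norm_mul, map_sum]
  exact Finset.sum_le_sum fun i _ ↦ by simpa using neg_norm_le_re_star_mul (hθ i) (u i)

theorem Matrix.PosSemidef.two_mul_re_dotProduct_mulVec_le {M : Matrix ι ι 𝕜}
    (hM : M.PosSemidef) (x y : ι → 𝕜) :
    2 * RCLike.re (star x ⬝ᵥ M *ᵥ y) ≤
      RCLike.re (star x ⬝ᵥ M *ᵥ x) + RCLike.re (star y ⬝ᵥ M *ᵥ y) := by
  have hsymm : star y ⬝ᵥ M *ᵥ x = star (star x ⬝ᵥ M *ᵥ y) := by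
    rw [star_dotProduct, star_mulVec, hM.1, ← dotProduct_mulVec]
  have hnonneg := (RCLike.nonneg_iff.mp (hM.dotProduct_mulVec_nonneg (x - y))).1
  rw [star_sub, mulVec_sub, sub_dotProduct, dotProduct_sub, dotProduct_sub, hsymm] at hnonneg
  simp only [map_sub, RCLike.star_def, RCLike.conj_re] at hnonneg
  linarith
end

theorem mm_descent_general {n : ℕ} (Z : Matrix (Fin n) (Fin n) ℂ) (ζ : ℝ)
    (hζ : ((ζ : ℂ) • (1 : Matrix (Fin n) (Fin n) ℂ) - Z).PosSemidef)
    (q : Fin n → ℂ) (θ₀ : Fin n → ℂ) (hθ₀ : ∀ i, ‖θ₀ i‖ = 1)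
    (u : Fin n → ℂ)
    (hu : u = (Z - (ζ : ℂ) • (1 : Matrix (Fin n) (Fin n) ℂ)) *ᵥ θ₀ - q)
    (hune : ∀ i, u i ≠ 0)
    (θp : Fin n → ℂ) (hθp : ∀ i, θp i = -(u i) / (‖u i‖ : ℂ)) :
    (∀ i, ‖θp i‖ = 1) ∧
    (star θp ⬝ᵥ Z *ᵥ θp).re - 2 * (star θp ⬝ᵥ q).re ≤
      (star θ₀ ⬝ᵥ Z *ᵥ θ₀).re - 2 * (star θ₀ ⬝ᵥ q).re := by
  set M := (ζ : ℂ) • (1 : Matrix (Fin n) (Fin n) ℂ) - Z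
  have hθp_norm : ∀ i, ‖θp i‖ = 1 := fun i ↦ by rw [hθp]; exact norm_neg_div_norm (hune i)
  refine ⟨hθp_norm, ?_⟩
  have hZ_form : ∀ θ : Fin n → ℂ, (∀ i, ‖θ i‖ = 1) →
      (star θ ⬝ᵥ Z *ᵥ θ).re = ζ * n - (star θ ⬝ᵥ M *ᵥ θ).re := fun θ hθ ↦ by
    simp [M, sub_mulVec, smul_mulVec, star_dotProduct_self_of_norm_eq_one hθ]
  have hcross : ∀ x : Fin n → ℂ,
      (star x ⬝ᵥ M *ᵥ θ₀).re = -(star x ⬝ᵥ u).re - (star x ⬝ᵥ q).re := fun x ↦ by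
    have hMθ₀ : M *ᵥ θ₀ = -(u + q) := by
      rw [show M = -(Z - (ζ : ℂ) • 1) from (neg_sub _ _).symm, neg_mulVec, hu]; abel
    simp only [hMθ₀, neg_add_rev, dotProduct_add, dotProduct_neg, Complex.add_re, Complex.neg_re]
    ring
  have hmajorize := hζ.two_mul_re_dotProduct_mulVec_le θp θ₀
  have hminimize : (star θp ⬝ᵥ u).re ≤ (star θ₀ ⬝ᵥ u).re := by
    rw [funext hθp]; exact re_star_dotProduct_le_of_norm_eq_one u hθ₀
  simp only [RCLike.re_to_complex] at hmajorize
  linarith [hZ_form θp hθp_norm, hZ_form θ₀ hθ₀, hcross θp, hcross θ₀]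

/-- Monotone descent of the MM update: with `Z` Hermitian, `ζI − Z` PSD, `θ₀` unit
modulus, `u = (Z − ζI)θ₀ − q` with nonzero entries, the iterate `θ⁺ᵢ = −uᵢ/|uᵢ|` has
unit-modulus entries and satisfies `g(θ⁺) ≤ g(θ₀)`. -/
theorem mm_descent {n : ℕ} (Z : Matrix (Fin n) (Fin n) ℂ) (hZ : Z.IsHermitian) (ζ : ℝ)
    (hζ : ((ζ : ℂ) • (1 : Matrix (Fin n) (Fin n) ℂ) - Z).PosSemidef)
    (q : Fin n → ℂ) (θ₀ : Fin n → ℂ) (hθ₀ : ∀ i, ‖θ₀ i‖ = 1)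
    (u : Fin n → ℂ)
    (hu : u = (Z - (ζ : ℂ) • (1 : Matrix (Fin n) (Fin n) ℂ)) *ᵥ θ₀ - q)
    (hune : ∀ i, u i ≠ 0)
    (θp : Fin n → ℂ) (hθp : ∀ i, θp i = -(u i) / (‖u i‖ : ℂ)) :
    (∀ i, ‖θp i‖ = 1) ∧
    (star θp ⬝ᵥ Z *ᵥ θp).re - 2 * (star θp ⬝ᵥ q).re ≤
      (star θ₀ ⬝ᵥ Z *ᵥ θ₀).re - 2 * (star θ₀ ⬝ᵥ q).re :=
  mm_descent_general Z ζ hζ q θ₀ hθ₀ u hu hune θp hθp
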